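/- For integers n and p with 0 ≤ p < n, the alternating sum ∑_{j=0}^{n} (-1)^j * C(n,j) * j^p equals 0 (with the convention 0^0 = 1). -/
import Mathlib

open Finset Function fwdDiff

lemma fwdDiff_pow_zero (p n : ℕ) (hp : p < n) :
    (Δ_[(1:ℕ)])^[n] (fun x : ℕ => (x : ℤ) ^ p) = fun _ => 0 := by
  induction p using Nat.strong_induction_on generalizing n with
  | _ p IH =>
    obtain ⟨m, rfl⟩ := Nat.exists_eq_add_of_lt hp
    have hΔ : Δ_[1] (fun x : ℕ => (x : ℤ) ^ p)
        = ∑ j ∈ range p, fun x : ℕ => (p.choose j : ℤ) * (x : ℤ) ^ j := by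
      ext x
      simp only [fwdDiff, Finset.sum_apply]
      have := add_pow (x : ℤ) 1 p
      rw [Finset.sum_range_succ] at this
      simp only [one_pow, mul_one, Nat.choose_self, Nat.cast_one] at this
      push_cast
      rw [this, add_sub_cancel_right]
      exact Finset.sum_congr rfl fun j _ => mul_comm _ _
    rw [show p + m + 1 = (p + m) + 1 from rfl, Function.iterate_succ_apply, hΔ,
      fwdDiff_iter_finset_sum]
    ext x
    simp only [Finset.sum_apply, Pi.zero_apply]
    refine Finset.sum_eq_zero fun j hj => ?_
    have hj' : j < p := Finset.mem_range.mp hj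
    have hz := IH j hj' (p + m) (by omega)
    have heq : (fun x : ℕ => (p.choose j : ℤ) * (x : ℤ) ^ j)
        = (p.choose j : ℤ) • (fun x : ℕ => (x : ℤ) ^ j) := by
      ext x; simp [smul_eq_mul]
    rw [heq, fwdDiff_iter_const_smul, hz]
    simp

/-- Euler's finite difference theorem, vanishing case:
for `0 ≤ p < n`, `∑_{j=0}^{n} (-1)^j C(n,j) j^p = 0` (with `0^0 = 1`). -/
theorem stmt_0 (n p : ℕ) (hp : p < n) :
    ∑ j ∈ Finset.range (n + 1), (-1 : ℤ) ^ j * (n.choose j : ℤ) * (j : ℤ) ^ p = 0 := by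
  have h := fwdDiff_iter_eq_sum_shift (1 : ℕ) (fun x : ℕ => (x : ℤ) ^ p) n 0
  rw [fwdDiff_pow_zero p n hp] at h
  simp only [zero_add, smul_eq_mul, smul_mul_assoc, smul_eq_mul, mul_one] at h
  have key : ∀ k ∈ range (n + 1), (-1 : ℤ) ^ k * (n.choose k : ℤ) * (k : ℤ) ^ p
      = (-1 : ℤ) ^ n * ((-1 : ℤ) ^ (n - k) * (n.choose k : ℤ) * (k : ℤ) ^ p) := by
    intro k hk
    have hk' : k ≤ n := Nat.lt_succ_iff.mp (Finset.mem_range.mp hk)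
    have hpow : (-1 : ℤ) ^ n = (-1 : ℤ) ^ (n - k) * (-1 : ℤ) ^ k := by
      rw [← pow_add]; congr 1; omega
    have h1 : ((-1:ℤ)^(n-k)) * ((-1:ℤ)^(n-k)) = 1 := by
      rw [← pow_add]; exact Even.neg_one_pow ⟨n - k, rfl⟩
    rw [hpow]
    linear_combination (-((-1:ℤ)^k * (n.choose k:ℤ) * (k:ℤ)^p)) * h1
  rw [Finset.sum_congr rfl key, ← Finset.mul_sum, ← h, mul_zero]
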